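/- Let F(X,Y) = X + Y + XY be the multiplicative formal group law over the ring ℤ_p of p-adic integers (Mathlib's PadicInt). Then the map sending an endomorphism φ of F (a homomorphism of formal group laws φ : F → F over ℤ_p) to its linear coefficient (the coefficient of T in φ) is a bijection from the set of endomorphisms of F onto ℤ_p; under this bijection the automorphisms of F (endomorphisms invertible under composition) correspond exactly to the units ℤ_p^×. In particular Aut(Ĝ_m over ℤ_p) ≅ ℤ_p^×. -/

import Mathlib

noncomputable section

/-- The total degree of a monomial exponent. -/
def FGL.degSum {σ : Type} (d : σ →₀ ℕ) : ℕ := d.sum fun _ n => n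

/-- Substitution `F(a, b)` of the pair `(a, b)` into a two-variable power series
`F ∈ R⟦X,Y⟧`.  This is the legitimate substitution whenever `a` and `b` have zero
constant term, since then only finitely many monomials of `F` contribute to each
coefficient. -/
def FGL.subst2 {R : Type} [CommRing R] {σ : Type} (F : MvPowerSeries (Fin 2) R)
    (a b : MvPowerSeries σ R) : MvPowerSeries σ R :=
  fun d =>
    MvPowerSeries.coeff d
      (∑ q ∈ Finset.range (FGL.degSum d + 1) ×ˢ Finset.range (FGL.degSum d + 1),
        MvPowerSeries.C (σ := σ) (R := R)
            (MvPowerSeries.coeff (Finsupp.single 0 q.1 + Finsupp.single 1 q.2) F) *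
          (a ^ q.1 * b ^ q.2))

/-- Substitution `φ(s)` of `s` into a one-variable power series `φ ∈ R⟦T⟧`.  This is the
legitimate substitution whenever `s` has zero constant term. -/
def FGL.subst1 {R : Type} [CommRing R] {σ : Type} (φ : PowerSeries R)
    (s : MvPowerSeries σ R) : MvPowerSeries σ R :=
  fun d =>
    MvPowerSeries.coeff d
      (∑ k ∈ Finset.range (FGL.degSum d + 1),
        MvPowerSeries.C (σ := σ) (R := R) (PowerSeries.coeff k φ) * s ^ k)

/-- `F ∈ R⟦X,Y⟧` is a (one-dimensional, commutative) formal group law over `R`: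
`F(X,0) = X`, `F(0,Y) = Y`, `F(X,Y) = F(Y,X)` and `F(F(X,Y),Z) = F(X,F(Y,Z))`. -/
structure IsFGL {R : Type} [CommRing R] (F : MvPowerSeries (Fin 2) R) : Prop where
  substXzero : FGL.subst2 F (PowerSeries.X : MvPowerSeries Unit R) 0 = PowerSeries.X
  substZeroX : FGL.subst2 F 0 (PowerSeries.X : MvPowerSeries Unit R) = PowerSeries.X
  comm : FGL.subst2 F (MvPowerSeries.X (1 : Fin 2)) (MvPowerSeries.X (0 : Fin 2)) = F
  assoc : FGL.subst2 F
      (FGL.subst2 F (MvPowerSeries.X (0 : Fin 3)) (MvPowerSeries.X (1 : Fin 3)))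
        (MvPowerSeries.X (2 : Fin 3)) =
    FGL.subst2 F (MvPowerSeries.X (0 : Fin 3))
      (FGL.subst2 F (MvPowerSeries.X (1 : Fin 3)) (MvPowerSeries.X (2 : Fin 3)))

/-- `φ ∈ R⟦T⟧` is a homomorphism of formal group laws `F → G`: it has zero constant
term and satisfies `φ(F(X,Y)) = G(φ(X), φ(Y))`. -/
structure IsFGLHom {R : Type} [CommRing R] (F G : MvPowerSeries (Fin 2) R)
    (φ : PowerSeries R) : Prop where
  constantCoeff_eq_zero : PowerSeries.constantCoeff φ = 0
  hom : FGL.subst1 φ F =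
    FGL.subst2 G (FGL.subst1 φ (MvPowerSeries.X (0 : Fin 2)))
      (FGL.subst1 φ (MvPowerSeries.X (1 : Fin 2)))

end

noncomputable section

/-- The multiplicative formal group law `F(X,Y) = X + Y + XY` over the `p`-adic
integers. -/
def FGL.Gm (p : ℕ) [Fact p.Prime] : MvPowerSeries (Fin 2) ℤ_[p] :=
  MvPowerSeries.X 0 + MvPowerSeries.X 1 + MvPowerSeries.X 0 * MvPowerSeries.X 1


/-!
For `a ∈ ℤ_p` the series `[a] = (1 + X) ^ a - 1 = ∑_{n ≥ 1} (a choose n) X ^ n` is an endomorphism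
of `X + Y + XY` with linear coefficient `a`, and `[a] ∘ [b] = [ab]`. For natural `a` these are
identities between polynomials in `1 + X`; the coefficients of both sides are continuous in `a`,
and `ℕ` is dense in `ℤ_p`.

Conversely, differentiating `φ(X + Y + XY) = φ(X) + φ(Y) + φ(X) φ(Y)` in `Y` at `Y = 0` gives
`(1 + X) φ' = c₁ (1 + φ)`, i.e. `(n + 1) cₙ₊₁ + n cₙ = c₁ (δₙ₀ + cₙ)`. Since `ℤ_p` is torsion-free,
this determines `φ` from `c₁`, so every endomorphism is some `[a]`. Linear coefficients multiply
under composition, so an automorphism has a unit linear coefficient, and for a unit `u` the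
inverse of `[u]` is `[u⁻¹]`.
-/

namespace FGL

open MvPowerSeries Finset

section Substitution

variable {R σ : Type} [CommRing R]

theorem degSum_eq_degree (d : σ →₀ ℕ) : degSum d = d.degree := rfl

theorem coeff_pow_eq_zero_of_degSum_lt {s : MvPowerSeries σ R} (hs : constantCoeff s = 0)
    {k : ℕ} {d : σ →₀ ℕ} (h : degSum d < k) : coeff d (s ^ k) = 0 :=
  coeff_of_lt_order <| (Nat.cast_lt.2 h).trans_le (le_order_pow_of_constantCoeff_eq_zero k hs)

theorem coeff_pow_mul_pow_eq_zero_of_degSum_lt {a b : MvPowerSeries σ R}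
    (ha : constantCoeff a = 0) (hb : constantCoeff b = 0) {i j : ℕ} {d : σ →₀ ℕ}
    (h : degSum d < i + j) : coeff d (a ^ i * b ^ j) = 0 := by
  refine coeff_of_lt_order <| (Nat.cast_lt.2 h).trans_le ?_
  calc ((i + j : ℕ) : ℕ∞) = i + j := by push_cast; rfl
    _ ≤ (a ^ i).order + (b ^ j).order := add_le_add
        (le_order_pow_of_constantCoeff_eq_zero i ha) (le_order_pow_of_constantCoeff_eq_zero j hb)
    _ ≤ (a ^ i * b ^ j).order := le_order_mul

theorem coeff_subst1 (φ : PowerSeries R) {s : MvPowerSeries σ R} (hs : constantCoeff s = 0)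
    {d : σ →₀ ℕ} {M : ℕ} (hM : degSum d ≤ M) :
    coeff d (subst1 φ s) = ∑ k ∈ range (M + 1), PowerSeries.coeff k φ * coeff d (s ^ k) := by
  have hdef : coeff d (subst1 φ s) =
      ∑ k ∈ range (degSum d + 1), PowerSeries.coeff k φ * coeff d (s ^ k) := by
    simp only [← coeff_C_mul, ← map_sum]
    rfl
  rw [hdef]
  refine sum_subset (range_subset_range.2 (by omega)) fun k _ hk => ?_
  rw [coeff_pow_eq_zero_of_degSum_lt hs (by simpa using hk), mul_zero]

theorem coeff_subst2 (F : MvPowerSeries (Fin 2) R) {a b : MvPowerSeries σ R}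
    (ha : constantCoeff a = 0) (hb : constantCoeff b = 0) {d : σ →₀ ℕ} {M : ℕ}
    (hM : degSum d ≤ M) :
    coeff d (subst2 F a b) = ∑ q ∈ range (M + 1) ×ˢ range (M + 1),
      coeff (Finsupp.single 0 q.1 + Finsupp.single 1 q.2) F * coeff d (a ^ q.1 * b ^ q.2) := by
  have hdef : coeff d (subst2 F a b) = ∑ q ∈ range (degSum d + 1) ×ˢ range (degSum d + 1),
      coeff (Finsupp.single 0 q.1 + Finsupp.single 1 q.2) F * coeff d (a ^ q.1 * b ^ q.2) := by
    simp only [← coeff_C_mul, ← map_sum]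
    rfl
  rw [hdef]
  refine sum_subset (product_subset_product (range_subset_range.2 (by omega))
    (range_subset_range.2 (by omega))) fun q _ hq => ?_
  rw [coeff_pow_mul_pow_eq_zero_of_degSum_lt ha hb, mul_zero]
  simp only [mem_product, mem_range, not_and_or, not_lt] at hq
  omega

theorem constantCoeff_subst1 (φ : PowerSeries R) (s : MvPowerSeries σ R) :
    constantCoeff (subst1 φ s) = PowerSeries.constantCoeff φ := by
  rw [← coeff_zero_eq_constantCoeff_apply]
  change coeff 0 (∑ k ∈ range (degSum 0 + 1), C (PowerSeries.coeff k φ) * s ^ k) = _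
  simp [degSum_eq_degree]

theorem subst1_coe (p : Polynomial R) {s : MvPowerSeries σ R} (hs : constantCoeff s = 0) :
    subst1 (p : PowerSeries R) s = Polynomial.aeval s p := by
  ext d
  rw [coeff_subst1 _ hs (le_max_left (degSum d) p.natDegree),
    Polynomial.aeval_eq_sum_range' (Nat.lt_succ_of_le (le_max_right (degSum d) _)), map_sum]
  simp [Polynomial.coeff_coe]

theorem coeff_one_subst1 (ψ φ : PowerSeries R) (hφ : PowerSeries.constantCoeff φ = 0) :
    PowerSeries.coeff 1 (subst1 ψ (φ : MvPowerSeries Unit R)) =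
      PowerSeries.coeff 1 ψ * PowerSeries.coeff 1 φ := by
  rw [PowerSeries.coeff, coeff_subst1 ψ hφ (M := 1) (by simp [degSum_eq_degree])]
  simp [sum_range_succ, MvPowerSeries.coeff_one, PowerSeries.coeff]

theorem coeff_subst1_X [DecidableEq σ] (φ : PowerSeries R) (i : σ) (d : σ →₀ ℕ) :
    coeff d (subst1 φ (X i)) =
      if d = Finsupp.single i (d i) then PowerSeries.coeff (d i) φ else 0 := by
  rw [coeff_subst1 φ (constantCoeff_X i) le_rfl, sum_eq_single (d i)]
  · simp [coeff_X_pow]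
  · intro k _ hk
    rw [coeff_X_pow, if_neg fun h => hk (by simp [h]), mul_zero]
  · intro h
    exact absurd (mem_range.2 (Nat.lt_succ_of_le (Finsupp.le_degree i d))) h

theorem subst2_add (F G : MvPowerSeries (Fin 2) R) (a b : MvPowerSeries σ R) :
    subst2 (F + G) a b = subst2 F a b + subst2 G a b := by
  ext d
  change coeff d (∑ q ∈ _, C (coeff _ (F + G)) * _) =
    coeff d (∑ q ∈ _, C (coeff _ F) * _) + coeff d (∑ q ∈ _, C (coeff _ G) * _)
  simp only [map_add, add_mul, sum_add_distrib]

theorem single_add_single_inj {i j k l : ℕ} :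
    Finsupp.single (0 : Fin 2) i + Finsupp.single 1 j = Finsupp.single 0 k + Finsupp.single 1 l ↔
      (i, j) = (k, l) := by
  refine ⟨fun h => ?_, fun h => by simp_all⟩
  have h0 := DFunLike.congr_fun h 0
  have h1 := DFunLike.congr_fun h 1
  simp only [Finsupp.add_apply, Finsupp.single_apply] at h0 h1
  simp_all

theorem subst2_monomial {a b : MvPowerSeries σ R} (ha : constantCoeff a = 0)
    (hb : constantCoeff b = 0) (i j : ℕ) (c : R) :
    subst2 (monomial (Finsupp.single 0 i + Finsupp.single 1 j) c) a b = C c * (a ^ i * b ^ j) := by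
  classical
  ext d
  rw [coeff_subst2 _ ha hb (M := degSum d + i + j) (by omega), coeff_C_mul]
  simp only [coeff_monomial, single_add_single_inj, ite_mul, zero_mul, Prod.mk.eta]
  rw [sum_ite_eq', if_pos (by simp only [mem_product, mem_range]; omega)]

end Substitution

section YDerivative

variable (R : Type) [CommRing R]

/-- `F(X, Y) ↦ F(X, 0)`. -/
def evalYZero : MvPowerSeries (Fin 2) R →+* PowerSeries R :=
  (PowerSeries.map constantCoeff).comp (finSuccEquiv R 1).toRingHom

/-- `F(X, Y) ↦ ∂F/∂Y (X, 0)`. -/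
def yDerivAtZero : MvPowerSeries (Fin 2) R →+ PowerSeries R :=
  (evalYZero R).toAddMonoidHom.comp (pderiv R 1).toAddMonoidHom

variable {R}

theorem coeff_evalYZero (f : MvPowerSeries (Fin 2) R) (n : ℕ) :
    PowerSeries.coeff n (evalYZero R f) = coeff (Finsupp.single 0 n) f := by
  have hcons : Finsupp.cons n (0 : Fin 1 →₀ ℕ) = Finsupp.single 0 n := by
    ext i
    fin_cases i
    · simp
    · simpa using Finsupp.cons_succ (0 : Fin 1) n 0
  simp [evalYZero, PowerSeries.coeff_map, ← coeff_zero_eq_constantCoeff_apply,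
    coeff_coeff_finSuccEquiv, hcons]

theorem coeff_yDerivAtZero (f : MvPowerSeries (Fin 2) R) (n : ℕ) :
    PowerSeries.coeff n (yDerivAtZero R f) =
      coeff (Finsupp.single 0 n + Finsupp.single 1 1) f := by
  simp [yDerivAtZero, coeff_evalYZero, coeff_pderiv]

theorem yDerivAtZero_mul (f g : MvPowerSeries (Fin 2) R) :
    yDerivAtZero R (f * g) =
      evalYZero R f * yDerivAtZero R g + yDerivAtZero R f * evalYZero R g := by
  simp [yDerivAtZero, Derivation.leibniz, mul_comm]

@[simp] theorem evalYZero_X_zero : evalYZero R (X 0) = PowerSeries.X := by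
  simp [evalYZero]

@[simp] theorem evalYZero_X_one : evalYZero R (X 1) = 0 := by
  change PowerSeries.map constantCoeff (finSuccEquiv R 1 (X (Fin.succ 0))) = 0
  rw [finSuccEquiv_X_succ]
  simp

theorem evalYZero_subst1_X_zero (φ : PowerSeries R) : evalYZero R (subst1 φ (X 0)) = φ := by
  ext n
  simp [coeff_evalYZero, coeff_subst1_X]

theorem evalYZero_subst1_X_one (φ : PowerSeries R) :
    evalYZero R (subst1 φ (X 1)) = PowerSeries.C (PowerSeries.constantCoeff φ) := by
  ext n
  rcases n with _ | n <;> simp [coeff_evalYZero, coeff_subst1_X, PowerSeries.coeff_C]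

theorem yDerivAtZero_subst1_X_zero (φ : PowerSeries R) :
    yDerivAtZero R (subst1 φ (X 0)) = 0 := by
  ext n
  simp [coeff_yDerivAtZero, coeff_subst1_X]

theorem yDerivAtZero_subst1_X_one (φ : PowerSeries R) :
    yDerivAtZero R (subst1 φ (X 1)) = PowerSeries.C (PowerSeries.coeff 1 φ) := by
  ext n
  rcases n with _ | n <;> simp [coeff_yDerivAtZero, coeff_subst1_X, PowerSeries.coeff_C]

end YDerivative

def multiplicative (R : Type) [CommRing R] : MvPowerSeries (Fin 2) R :=
  X 0 + X 1 + X 0 * X 1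

section Multiplicative

variable {R : Type} [CommRing R]

theorem constantCoeff_multiplicative : constantCoeff (multiplicative R) = 0 := by
  simp [multiplicative]

theorem subst2_multiplicative {σ : Type} {a b : MvPowerSeries σ R} (ha : constantCoeff a = 0)
    (hb : constantCoeff b = 0) : subst2 (multiplicative R) a b = a + b + a * b := by
  have hX0 : (X 0 : MvPowerSeries (Fin 2) R) =
      monomial (Finsupp.single 0 1 + Finsupp.single 1 0) 1 := by simp [X]
  have hX1 : (X 1 : MvPowerSeries (Fin 2) R) =
      monomial (Finsupp.single 0 0 + Finsupp.single 1 1) 1 := by simp [X]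
  have hXY : (X 0 * X 1 : MvPowerSeries (Fin 2) R) =
      monomial (Finsupp.single 0 1 + Finsupp.single 1 1) 1 := by simp [X, monomial_mul_monomial]
  rw [multiplicative, hXY, hX0, hX1, subst2_add, subst2_add, subst2_monomial ha hb,
    subst2_monomial ha hb, subst2_monomial ha hb]
  simp

theorem isFGLHom_multiplicative_iff {φ : PowerSeries R} :
    IsFGLHom (multiplicative R) (multiplicative R) φ ↔ PowerSeries.constantCoeff φ = 0 ∧
      subst1 φ (multiplicative R) =
        subst1 φ (X 0) + subst1 φ (X 1) + subst1 φ (X 0) * subst1 φ (X 1) := by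
  refine ⟨fun h => ⟨h.constantCoeff_eq_zero, ?_⟩, fun ⟨h0, h⟩ => ⟨h0, ?_⟩⟩
  · rw [h.hom, subst2_multiplicative] <;> rw [constantCoeff_subst1, h.constantCoeff_eq_zero]
  · rw [h, subst2_multiplicative] <;> rw [constantCoeff_subst1, h0]

theorem yDerivAtZero_multiplicative_pow (k : ℕ) :
    yDerivAtZero R (multiplicative R ^ k) =
      (k : PowerSeries R) * PowerSeries.X ^ (k - 1) * (1 + PowerSeries.X) := by
  simp [yDerivAtZero, multiplicative, Derivation.leibniz, mul_assoc]

theorem coeff_single_add_single_one_multiplicative_pow (n k : ℕ) :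
    coeff (Finsupp.single 0 n + Finsupp.single 1 1) (multiplicative R ^ k) =
      (if k = n + 1 then (k : R) else 0) + (if k = n then (k : R) else 0) := by
  rw [← coeff_yDerivAtZero, yDerivAtZero_multiplicative_pow]
  rcases k with _ | j
  · simp
  · rw [← map_natCast PowerSeries.C, mul_assoc, PowerSeries.coeff_C_mul, add_tsub_cancel_right,
      mul_add, mul_one, ← pow_succ, map_add, PowerSeries.coeff_X_pow, PowerSeries.coeff_X_pow]
    split_ifs <;> first | omega | simp

end Multiplicative

end FGL

namespace IsFGLHom

open FGL MvPowerSeries Finset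

variable {R : Type} [CommRing R]

theorem coeff_succ_multiplicative {φ : PowerSeries R}
    (hφ : IsFGLHom (multiplicative R) (multiplicative R) φ) (n : ℕ) :
    (n + 1 : R) * PowerSeries.coeff (n + 1) φ + n * PowerSeries.coeff n φ =
      PowerSeries.coeff 1 φ * PowerSeries.coeff n (1 + φ) := by
  obtain ⟨h0, hom⟩ := isFGLHom_multiplicative_iff.1 hφ
  have h := congrArg (PowerSeries.coeff n ∘ yDerivAtZero R) hom
  simp only [Function.comp_apply, map_add, yDerivAtZero_mul, evalYZero_subst1_X_zero,
    evalYZero_subst1_X_one, yDerivAtZero_subst1_X_zero, yDerivAtZero_subst1_X_one, h0] at h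
  rw [coeff_yDerivAtZero, coeff_subst1 φ constantCoeff_multiplicative (M := n + 1)
    (by simp [degSum_eq_degree])] at h
  simp only [coeff_single_add_single_one_multiplicative_pow, mul_add, mul_ite, mul_zero,
    sum_add_distrib, sum_ite_eq', mem_range] at h
  rw [if_pos (by omega), if_pos (by omega)] at h
  simp only [map_zero, zero_mul, add_zero, zero_add, PowerSeries.coeff_mul_C,
    PowerSeries.coeff_C] at h
  rw [map_add, PowerSeries.coeff_one]
  push_cast at h
  split_ifs at h ⊢ <;> linear_combination h

theorem eq_of_coeff_one_eq_multiplicative [IsAddTorsionFree R] {φ ψ : PowerSeries R}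
    (hφ : IsFGLHom (multiplicative R) (multiplicative R) φ)
    (hψ : IsFGLHom (multiplicative R) (multiplicative R) ψ)
    (h1 : PowerSeries.coeff 1 φ = PowerSeries.coeff 1 ψ) : φ = ψ := by
  ext n
  induction n with
  | zero => simp [hφ.constantCoeff_eq_zero, hψ.constantCoeff_eq_zero]
  | succ n ih =>
    have hφn := hφ.coeff_succ_multiplicative n
    rw [map_add, ih, h1, ← map_add, ← hψ.coeff_succ_multiplicative n, add_left_inj] at hφn
    refine nsmul_right_injective n.succ_ne_zero ?_
    simpa [nsmul_eq_mul] using hφn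

end IsFGLHom

namespace FGL

open MvPowerSeries

section Binomial

variable {R : Type} [CommRing R] [BinomialRing R]

variable (R) in
def binomialSeriesSubOne (a : R) : PowerSeries R := PowerSeries.binomialSeries R a - 1

@[simp] theorem constantCoeff_binomialSeriesSubOne (a : R) :
    PowerSeries.constantCoeff (binomialSeriesSubOne R a) = 0 := by
  simp [binomialSeriesSubOne]

@[simp] theorem coeff_one_binomialSeriesSubOne (a : R) :
    PowerSeries.coeff 1 (binomialSeriesSubOne R a) = a := by
  simp [binomialSeriesSubOne]

theorem binomialSeriesSubOne_natCast (m : ℕ) :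
    binomialSeriesSubOne R m = (((1 + Polynomial.X) ^ m - 1 : Polynomial R) : PowerSeries R) := by
  simp [binomialSeriesSubOne]

theorem binomialSeriesSubOne_one : binomialSeriesSubOne R 1 = PowerSeries.X := by
  simpa using binomialSeriesSubOne_natCast (R := R) 1

theorem binomialSeries_natCast_mul (m : ℕ) (a : R) :
    PowerSeries.binomialSeries R (m * a) = PowerSeries.binomialSeries R a ^ m := by
  induction m with
  | zero => simp
  | succ m ih => rw [Nat.cast_succ, add_one_mul, PowerSeries.binomialSeries_add, ih, pow_succ]

theorem subst1_binomialSeriesSubOne_natCast {σ : Type} (m : ℕ) {s : MvPowerSeries σ R}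
    (hs : constantCoeff s = 0) : subst1 (binomialSeriesSubOne R m) s = (1 + s) ^ m - 1 := by
  rw [binomialSeriesSubOne_natCast, subst1_coe _ hs]
  simp

end Binomial

open MvPowerSeries.WithPiTopology PowerSeries.WithPiTopology

theorem continuous_subst1_left {R σ Y : Type} [CommRing R] [TopologicalSpace R]
    [IsTopologicalSemiring R] [TopologicalSpace Y] {f : Y → PowerSeries R}
    (hf : Continuous f) {s : MvPowerSeries σ R} (hs : constantCoeff s = 0) :
    Continuous fun y => subst1 (f y) s := by
  refine continuous_pi fun d => ?_
  simp_rw [← coeff_apply, coeff_subst1 _ hs le_rfl]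
  exact continuous_finsetSum _ fun k _ =>
    ((PowerSeries.WithPiTopology.continuous_coeff R k).comp hf).mul continuous_const

section Padic

variable {p : ℕ} [Fact p.Prime]

theorem continuous_binomialSeriesSubOne : Continuous (binomialSeriesSubOne ℤ_[p]) := by
  refine continuous_pi fun d => ?_
  change Continuous fun a => Ring.choose a (d ()) • (1 : ℤ_[p]) - (1 : PowerSeries ℤ_[p]) d
  exact ((PadicInt.continuous_choose (d ())).smul continuous_const).sub continuous_const

theorem eq_of_eq_natCast {Y : Type} [TopologicalSpace Y] [T2Space Y] {f g : ℤ_[p] → Y}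
    (hf : Continuous f) (hg : Continuous g) (h : ∀ m : ℕ, f m = g m) : f = g :=
  PadicInt.denseRange_natCast.equalizer hf hg (funext h)

theorem isFGLHom_binomialSeriesSubOne (a : ℤ_[p]) :
    IsFGLHom (multiplicative ℤ_[p]) (multiplicative ℤ_[p])
      (binomialSeriesSubOne ℤ_[p] a) := by
  set E := binomialSeriesSubOne ℤ_[p]
  have hE {s : MvPowerSeries (Fin 2) ℤ_[p]} (hs : constantCoeff s = 0) :=
    continuous_subst1_left continuous_binomialSeriesSubOne hs
  have key : (fun a => subst1 (E a) (multiplicative ℤ_[p])) = fun a =>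
      subst1 (E a) (X 0) + subst1 (E a) (X 1) + subst1 (E a) (X 0) * subst1 (E a) (X 1) := by
    refine eq_of_eq_natCast (hE constantCoeff_multiplicative)
      (((hE (constantCoeff_X 0)).add (hE (constantCoeff_X 1))).add
        ((hE (constantCoeff_X 0)).mul (hE (constantCoeff_X 1)))) fun m => ?_
    simp only [E]
    rw [subst1_binomialSeriesSubOne_natCast m constantCoeff_multiplicative,
      subst1_binomialSeriesSubOne_natCast m (constantCoeff_X 0),
      subst1_binomialSeriesSubOne_natCast m (constantCoeff_X 1), multiplicative,
      show (1 : MvPowerSeries (Fin 2) ℤ_[p]) + (X 0 + X 1 + X 0 * X 1) = (1 + X 0) * (1 + X 1) by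
        ring, mul_pow]
    ring
  exact isFGLHom_multiplicative_iff.2 ⟨constantCoeff_binomialSeriesSubOne a, congrFun key a⟩

theorem subst1_binomialSeriesSubOne (a b : ℤ_[p]) :
    subst1 (binomialSeriesSubOne ℤ_[p] a)
        (binomialSeriesSubOne ℤ_[p] b : MvPowerSeries Unit ℤ_[p]) =
      binomialSeriesSubOne ℤ_[p] (a * b) := by
  refine congrFun (eq_of_eq_natCast (f := fun a => subst1 (binomialSeriesSubOne ℤ_[p] a)
      (binomialSeriesSubOne ℤ_[p] b : MvPowerSeries Unit ℤ_[p]))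
    (continuous_subst1_left continuous_binomialSeriesSubOne
      (constantCoeff_binomialSeriesSubOne b))
    (continuous_binomialSeriesSubOne.comp (continuous_mul_const b)) fun m => ?_) a
  rw [subst1_binomialSeriesSubOne_natCast m (constantCoeff_binomialSeriesSubOne b)]
  simp [binomialSeriesSubOne, binomialSeries_natCast_mul]

end Padic

end FGL

/-- **`End(Ĝ_m) ≅ ℤ_p` and `Aut(Ĝ_m) ≅ ℤ_p^×`.**  For the multiplicative formal group
law `F(X,Y) = X + Y + XY` over `ℤ_p`, taking the linear coefficient is a bijection from
the endomorphisms of `F` onto `ℤ_p`, and an endomorphism is an automorphism (invertible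
under composition) precisely when its linear coefficient is a unit of `ℤ_p`. -/
theorem endomorphisms_of_formal_multiplicative_group (p : ℕ) [Fact p.Prime] :
    Function.Bijective
      (fun φ : {φ : PowerSeries ℤ_[p] // IsFGLHom (FGL.Gm p) (FGL.Gm p) φ} =>
        PowerSeries.coeff 1 φ.val) ∧
    ∀ φ : {φ : PowerSeries ℤ_[p] // IsFGLHom (FGL.Gm p) (FGL.Gm p) φ},
      (∃ ψ : PowerSeries ℤ_[p], IsFGLHom (FGL.Gm p) (FGL.Gm p) ψ ∧
          FGL.subst1 ψ (φ.val : MvPowerSeries Unit ℤ_[p]) = PowerSeries.X ∧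
          FGL.subst1 φ.val (ψ : MvPowerSeries Unit ℤ_[p]) = PowerSeries.X) ↔
        IsUnit (PowerSeries.coeff 1 φ.val) := by
  refine ⟨⟨fun φ ψ h => Subtype.ext (φ.2.eq_of_coeff_one_eq_multiplicative ψ.2 h), fun a =>
    ⟨⟨_, FGL.isFGLHom_binomialSeriesSubOne a⟩, FGL.coeff_one_binomialSeriesSubOne a⟩⟩,
    fun φ => ⟨?_, ?_⟩⟩
  · rintro ⟨ψ, -, hψφ, -⟩
    refine IsUnit.of_mul_eq_one (PowerSeries.coeff 1 ψ) ?_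
    rw [mul_comm, ← FGL.coeff_one_subst1 ψ _ φ.2.constantCoeff_eq_zero, hψφ,
      PowerSeries.coeff_one_X]
  · rintro ⟨u, hu⟩
    have hφ : φ.val = FGL.binomialSeriesSubOne ℤ_[p] u :=
      φ.2.eq_of_coeff_one_eq_multiplicative (FGL.isFGLHom_binomialSeriesSubOne (u : ℤ_[p]))
        (by rw [FGL.coeff_one_binomialSeriesSubOne, hu])
    refine ⟨FGL.binomialSeriesSubOne ℤ_[p] ↑u⁻¹,
      FGL.isFGLHom_binomialSeriesSubOne (↑u⁻¹ : ℤ_[p]), ?_, ?_⟩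
    · rw [hφ, FGL.subst1_binomialSeriesSubOne, Units.inv_mul, FGL.binomialSeriesSubOne_one]
    · rw [hφ, FGL.subst1_binomialSeriesSubOne, Units.mul_inv, FGL.binomialSeriesSubOne_one]

end
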